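/- In the Kleinberg small-world model KSW(n,d,γ) with γ > 2d: for any fixed ε > 0, the probability that some long-range edge of the random graph connects two vertices at grid distance greater than n^{1/(γ−d)+ε} tends to 0 as n → ∞; equivalently, with probability 1 − o(1) every long-range edge joins vertices at grid distance at most n^{1/(γ−d)+ε}. -/

import Mathlib

open MeasureTheory
open scoped ENNReal

/-- Vertex set of the `d`-dimensional grid with side length `n'` (with wrap-around). -/
abbrev GridV (d n' : ℕ) : Type := Fin d → ZMod n'

instance (d n' : ℕ) : MeasurableSpace (GridV d n') := ⊤

/-- The base grid `B`: `u ~ v` iff they differ by `±1 (mod n')` in exactly one coordinate. -/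
def gridGraph (d n' : ℕ) : SimpleGraph (GridV d n') where
  Adj u v := u ≠ v ∧ ∃ j : Fin d, (v j = u j + 1 ∨ v j = u j - 1) ∧ ∀ i : Fin d, i ≠ j → v i = u i
  symm := by
    constructor
    rintro u v ⟨hne, j, hj, hoth⟩
    refine ⟨hne.symm, j, ?_, fun i hi => (hoth i hi).symm⟩
    rcases hj with h | h
    · right; rw [h]; ring
    · left; rw [h]; ring
  loopless := ⟨fun u h => h.1 rfl⟩

/-- The Kleinberg small-world graph determined by the long-range choices `σ`:
all grid edges, plus the undirected long-range edge `(u, σ u)` for every vertex `u`. -/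
def kswGraph (d n' : ℕ) (σ : GridV d n' → GridV d n') : SimpleGraph (GridV d n') where
  Adj u v := (gridGraph d n').Adj u v ∨ (u ≠ v ∧ (σ u = v ∨ σ v = u))
  symm := by
    constructor
    rintro u v (h | ⟨hne, h⟩)
    · exact Or.inl ((gridGraph d n').adj_symm h)
    · exact Or.inr ⟨hne.symm, h.symm⟩
  loopless := by
    constructor
    rintro u (h | ⟨hne, _⟩)
    · exact (gridGraph d n').irrefl h
    · exact hne rfl

/-- The (unnormalized) weight with which `u` picks `v` as its long-range contact:
`d_B(u,v)^{-γ}`, and `0` for `v = u`. -/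
noncomputable def kswWeight (d n' : ℕ) (γ : ℝ) (u v : GridV d n') : ℝ≥0∞ :=
  if v = u then 0 else ((gridGraph d n').dist u v : ℝ≥0∞) ^ (-γ)

/-- The distribution of the long-range contact of a single vertex `u`:
`v` is chosen with probability proportional to `d_B(u,v)^{-γ}`. -/
noncomputable def kswCoordMeasure (d : ℕ) (n' : ℕ+) (γ : ℝ) (u : GridV d n') :
    Measure (GridV d n') :=
  (∑ v : GridV d n', kswWeight d n' γ u v)⁻¹ •
    ∑ v : GridV d n', kswWeight d n' γ u v • Measure.dirac v

/-- The law of the random graph `KSW(n, d, γ)` (with `n = n'^d`), as the product measure of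
the independent long-range choices of all vertices. -/
noncomputable def kswMeasure (d : ℕ) (n' : ℕ+) (γ : ℝ) :
    Measure (GridV d n' → GridV d n') :=
  Measure.pi fun u => kswCoordMeasure d n' γ u

/-- The normalization function `f`: `f(s) = ln s` if `γ = d`, and `f(s) = s^{d-γ}` if `γ < d`. -/
noncomputable def fKSW (d : ℕ) (γ : ℝ) (s : ℕ) : ℝ :=
  if γ = d then Real.log s else (s : ℝ) ^ ((d : ℝ) - γ)


/-!
Union bound over the vertices. For a single vertex `u` and `D = d_B(u, v) > T`, split
`D^(-γ) = D^(d t - γ) * D^(-d t) ≤ T^(d t - γ) * ∏ j, max(|v j - u j|, 1)^(-t)`, using that every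
circular coordinate distance `|v j - u j|` is at most `D`. Summed over `v` the product factorises
into `d` one-dimensional sums, each bounded by the convergent series `∑ k : ℤ, max(|k|, 1)^(-t)`
for `t > 1`. The normalising constant is at least `1` (a grid neighbour has weight `1`), so the
probability of a jump longer than `T` is `O(n * T^(d t - γ))`; since `γ > d`, choosing `d t` close
enough to `d` makes this a negative power of `n` for `T = n^(1/(γ-d)+ε)`.
-/

open SimpleGraph

lemma ZMod.natAbs_valMinAbs_one_le {m : ℕ} [NeZero m] : (1 : ZMod m).valMinAbs.natAbs ≤ 1 := by
  rw [ZMod.valMinAbs_natAbs_eq_min, ZMod.val_one_eq_one_mod]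
  exact (min_le_left _ _).trans (Nat.mod_le 1 m)

section Grid

variable {d m : ℕ}

lemma gridGraph_adj_natAbs_valMinAbs_le [NeZero m] {u v : GridV d m} (h : (gridGraph d m).Adj u v)
    (i : Fin d) : (v i - u i).valMinAbs.natAbs ≤ 1 := by
  obtain ⟨-, j, hj, hother⟩ := h
  obtain rfl | hij := eq_or_ne i j
  · rcases hj with h | h <;> rw [h]
    · simpa using ZMod.natAbs_valMinAbs_one_le
    · simpa [ZMod.natAbs_valMinAbs_neg] using ZMod.natAbs_valMinAbs_one_le
  · simp [hother i hij, ZMod.valMinAbs_zero]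

lemma natAbs_valMinAbs_sub_le_walk_length [NeZero m] {u v : GridV d m}
    (p : (gridGraph d m).Walk u v) (i : Fin d) : (v i - u i).valMinAbs.natAbs ≤ p.length := by
  induction p with
  | nil => simp [ZMod.valMinAbs_zero]
  | @cons a b c hab p ih =>
    have htri := (ZMod.natAbs_valMinAbs_add_le (c i - b i) (b i - a i)).trans
      (Int.natAbs_add_le _ _)
    rw [sub_add_sub_cancel] at htri
    have := gridGraph_adj_natAbs_valMinAbs_le hab i
    rw [Walk.length_cons]
    omega

lemma gridGraph_reachable_update [NeZero m] (u : GridV d m) (i : Fin d) (c : ZMod m) :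
    (gridGraph d m).Reachable u (Function.update u i c) := by
  have step : ∀ w : GridV d m, (gridGraph d m).Reachable w (Function.update w i (w i + 1)) := by
    intro w
    by_cases h : Function.update w i (w i + 1) = w
    · rw [h]
    · exact Adj.reachable ⟨Ne.symm h, i, by simp, fun j hj => Function.update_of_ne hj _ _⟩
  have iter : ∀ k : ℕ, (gridGraph d m).Reachable u (Function.update u i (u i + k)) := by
    intro k
    induction k with
    | zero => simp
    | succ k ih =>
      refine ih.trans ?_
      convert step _ using 1
      simp [add_assoc]
  simpa using iter (c - u i).val

lemma gridGraph_preconnected [NeZero m] : (gridGraph d m).Preconnected := by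
  classical
  intro u v
  have : ∀ s : Finset (Fin d), (gridGraph d m).Reachable u (s.piecewise v u) := by
    intro s
    induction s using Finset.induction_on with
    | empty => simp
    | insert i s _ ih =>
      rw [Finset.piecewise_insert]
      exact ih.trans (gridGraph_reachable_update _ i _)
  simpa using this Finset.univ

lemma natAbs_valMinAbs_sub_le_gridGraph_dist [NeZero m] (u v : GridV d m) (i : Fin d) :
    (v i - u i).valMinAbs.natAbs ≤ (gridGraph d m).dist u v := by
  obtain ⟨p, hp⟩ := (gridGraph_preconnected u v).exists_walk_length_eq_dist
  exact hp ▸ natAbs_valMinAbs_sub_le_walk_length p i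

end Grid

lemma ENNReal.rpow_le_rpow_of_nonpos {x y : ℝ≥0∞} {z : ℝ} (hxy : x ≤ y) (hz : z ≤ 0) :
    y ^ z ≤ x ^ z := by
  simpa [ENNReal.rpow_neg] using
    ENNReal.inv_le_inv.mpr (ENNReal.rpow_le_rpow hxy (neg_nonneg.mpr hz))

lemma MeasureTheory.Measure.pi_eval_preimage_le {ι : Type*} [Fintype ι] {α : ι → Type*}
    [∀ i, MeasurableSpace (α i)] {μ : ∀ i, Measure (α i)} [∀ i, SigmaFinite (μ i)]
    (hμ : ∀ i, μ i Set.univ ≤ 1) (i : ι) (s : Set (α i)) :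
    Measure.pi μ (Function.eval i ⁻¹' s) ≤ μ i s := by
  classical
  rw [← Set.univ_pi_update_univ, Measure.pi_pi, ← Finset.mul_prod_erase _ _ (Finset.mem_univ i),
    Function.update_self]
  refine mul_le_of_le_one_right' (Finset.prod_le_one' fun j hj => ?_)
  rw [Function.update_of_ne (Finset.ne_of_mem_erase hj)]
  exact hμ j

/-- `max k 1` keeps the weight finite at `k = 0`, where `0 ^ (-t) = ⊤`. -/
noncomputable def clippedRpowNeg (t : ℝ) (k : ℕ) : ℝ≥0∞ := ((max k 1 : ℕ) : ℝ≥0∞) ^ (-t)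

lemma tsum_clippedRpowNeg_natAbs_ne_top {t : ℝ} (ht : 1 < t) :
    ∑' k : ℤ, clippedRpowNeg t k.natAbs ≠ ⊤ := by
  have hsum : Summable fun k : ℤ => ((max k.natAbs 1 : ℕ) : ℝ) ^ (-t) := by
    refine (Real.summable_abs_int_rpow ht).congr_cofinite ?_
    filter_upwards [Filter.eventually_cofinite_ne 0] with k hk
    rw [Nat.cast_max, Nat.cast_natAbs, Int.cast_abs, Nat.cast_one, max_eq_left]
    exact_mod_cast Int.one_le_abs hk
  have hterm : ∀ k : ℤ, clippedRpowNeg t k.natAbs =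
      ENNReal.ofReal (((max k.natAbs 1 : ℕ) : ℝ) ^ (-t)) := fun k => by
    rw [clippedRpowNeg, ← ENNReal.ofReal_rpow_of_pos (by positivity), ENNReal.ofReal_natCast]
  simp_rw [hterm, ← ENNReal.ofReal_tsum_of_nonneg (fun _ => by positivity) hsum]
  exact ENNReal.ofReal_ne_top

lemma sum_clippedRpowNeg_natAbs_valMinAbs_le {m : ℕ} [NeZero m] (t : ℝ) (a : ZMod m) :
    ∑ x : ZMod m, clippedRpowNeg t (x - a).valMinAbs.natAbs ≤
      ∑' k : ℤ, clippedRpowNeg t k.natAbs :=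
  (ENNReal.sum_le_tsum _).trans <| ENNReal.tsum_comp_le_tsum_of_injective
    (ZMod.injective_valMinAbs.comp (sub_left_injective (b := a)))
    (fun k => clippedRpowNeg t k.natAbs)

section Weights

variable {d m : ℕ} {γ : ℝ}

@[simp]
lemma kswWeight_self (u : GridV d m) : kswWeight d m γ u u = 0 := by
  simp [kswWeight]

lemma one_le_sum_kswWeight [NeZero m] {u v : GridV d m} (hv : v ≠ u) :
    1 ≤ ∑ w, kswWeight d m γ u w := by
  have : Nontrivial (GridV d m) := ⟨⟨u, v, hv.symm⟩⟩
  obtain ⟨w, huw⟩ := gridGraph_preconnected.exists_adj_of_nontrivial u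
  calc (1 : ℝ≥0∞) = kswWeight d m γ u w := by
        simp [kswWeight, huw.ne', dist_eq_one_iff_adj.mpr huw]
    _ ≤ ∑ w, kswWeight d m γ u w := Finset.single_le_sum (fun _ _ => zero_le) (Finset.mem_univ w)

lemma kswWeight_le_mul_prod [NeZero m] {t : ℝ} (ht : 0 ≤ t) {u v : GridV d m} (hv : v ≠ u) :
    kswWeight d m γ u v ≤ ((gridGraph d m).dist u v : ℝ≥0∞) ^ (d * t - γ) *
      ∏ j, clippedRpowNeg t (v j - u j).valMinAbs.natAbs := by
  have hD : 1 ≤ (gridGraph d m).dist u v := (gridGraph_preconnected u v).pos_dist_of_ne hv.symm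
  have hD0 : ((gridGraph d m).dist u v : ℝ≥0∞) ≠ 0 := by exact_mod_cast Nat.one_le_iff_ne_zero.mp hD
  calc kswWeight d m γ u v = ((gridGraph d m).dist u v : ℝ≥0∞) ^ (d * t - γ) *
        (((gridGraph d m).dist u v : ℝ≥0∞) ^ (-t)) ^ d := by
        rw [kswWeight, if_neg hv, ← ENNReal.rpow_natCast, ← ENNReal.rpow_mul,
          ← ENNReal.rpow_add _ _ hD0 (ENNReal.natCast_ne_top _)]
        ring_nf
    _ = ((gridGraph d m).dist u v : ℝ≥0∞) ^ (d * t - γ) *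
        ∏ _j : Fin d, ((gridGraph d m).dist u v : ℝ≥0∞) ^ (-t) := by simp
    _ ≤ _ := by
      gcongr with j
      refine ENNReal.rpow_le_rpow_of_nonpos ?_ (neg_nonpos.mpr ht)
      exact_mod_cast max_le (natAbs_valMinAbs_sub_le_gridGraph_dist u v j) hD

end Weights

section Measures

variable {d : ℕ} {n' : ℕ+} {γ : ℝ}

lemma kswCoordMeasure_apply (u : GridV d n') (s : Set (GridV d n')) :
    kswCoordMeasure d n' γ u s =
      (∑ v, kswWeight d n' γ u v)⁻¹ * ∑ v, s.indicator (kswWeight d n' γ u) v := by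
  simp only [kswCoordMeasure, Measure.smul_apply, Measure.coe_finsetSum, Finset.sum_apply,
    Measure.dirac_apply' _ (MeasurableSpace.measurableSet_top), smul_eq_mul]
  congr 1
  refine Finset.sum_congr rfl fun v _ => ?_
  by_cases hv : v ∈ s <;> simp [hv]

lemma kswCoordMeasure_univ_le_one (u : GridV d n') : kswCoordMeasure d n' γ u Set.univ ≤ 1 := by
  simp only [kswCoordMeasure_apply, Set.indicator_univ]
  exact ENNReal.inv_mul_le_one _

instance (u : GridV d n') : IsFiniteMeasure (kswCoordMeasure d n' γ u) :=
  ⟨(kswCoordMeasure_univ_le_one u).trans_lt ENNReal.one_lt_top⟩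

lemma kswCoordMeasure_le_sum_indicator (u : GridV d n') (s : Set (GridV d n')) :
    kswCoordMeasure d n' γ u s ≤ ∑ v, s.indicator (kswWeight d n' γ u) v := by
  rw [kswCoordMeasure_apply]
  obtain h0 | h0 := eq_or_ne (∑ v, s.indicator (kswWeight d n' γ u) v) 0
  · simp [h0]
  obtain ⟨v, -, hv⟩ := Finset.exists_ne_zero_of_sum_ne_zero h0
  have hvu : v ≠ u := by rintro rfl; simp at hv
  exact mul_le_of_le_one_left' (ENNReal.inv_le_one.mpr (one_le_sum_kswWeight hvu))

lemma kswCoordMeasure_far_le {t : ℝ} (ht : 0 ≤ t) (hγ : d * t ≤ γ) (u : GridV d n') (T : ℝ) :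
    kswCoordMeasure d n' γ u {v | T < (gridGraph d n').dist u v} ≤
      ENNReal.ofReal T ^ (d * t - γ) * (∑' k : ℤ, clippedRpowNeg t k.natAbs) ^ d := by
  calc kswCoordMeasure d n' γ u {v | T < (gridGraph d n').dist u v}
      ≤ ∑ v, {v | T < (gridGraph d n').dist u v}.indicator (kswWeight d n' γ u) v :=
        kswCoordMeasure_le_sum_indicator u _
    _ ≤ ∑ v : GridV d n', ENNReal.ofReal T ^ (d * t - γ) *
          ∏ j, clippedRpowNeg t (v j - u j).valMinAbs.natAbs := by
        refine Finset.sum_le_sum fun v _ => ?_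
        rw [Set.indicator_apply]
        split_ifs with hv
        · obtain rfl | hvu := eq_or_ne v u
          · simp
          refine (kswWeight_le_mul_prod ht hvu).trans (mul_le_mul_left ?_ _)
          refine ENNReal.rpow_le_rpow_of_nonpos ?_ (by linarith)
          simpa using ENNReal.ofReal_le_ofReal (le_of_lt hv)
        · exact zero_le
    _ = ENNReal.ofReal T ^ (d * t - γ) *
          ∏ j, ∑ x, clippedRpowNeg t (x - u j).valMinAbs.natAbs := by
        rw [Fintype.prod_sum, Finset.mul_sum]
    _ ≤ ENNReal.ofReal T ^ (d * t - γ) * (∑' k : ℤ, clippedRpowNeg t k.natAbs) ^ d := by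
        grw [Finset.prod_le_pow_card (n := ∑' k : ℤ, clippedRpowNeg t k.natAbs)]
        · simp
        · exact fun j _ => sum_clippedRpowNeg_natAbs_valMinAbs_le t (u j)

lemma kswMeasure_exists_far_le {t : ℝ} (ht : 0 ≤ t) (hγ : d * t ≤ γ) (T : ℝ) :
    kswMeasure d n' γ {σ | ∃ u, T < (gridGraph d n').dist u (σ u)} ≤
      (n' : ℝ≥0∞) ^ d * (ENNReal.ofReal T ^ (d * t - γ) *
        (∑' k : ℤ, clippedRpowNeg t k.natAbs) ^ d) := by
  have hunion : {σ : GridV d n' → GridV d n' | ∃ u, T < (gridGraph d n').dist u (σ u)} =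
      ⋃ u, Function.eval u ⁻¹' {v | T < (gridGraph d n').dist u v} := by
    ext; simp
  calc kswMeasure d n' γ {σ | ∃ u, T < (gridGraph d n').dist u (σ u)}
      ≤ ∑ u, kswMeasure d n' γ (Function.eval u ⁻¹' {v | T < (gridGraph d n').dist u v}) :=
        hunion ▸ measure_iUnion_fintype_le _ _
    _ ≤ ∑ _u : GridV d n', ENNReal.ofReal T ^ (d * t - γ) *
          (∑' k : ℤ, clippedRpowNeg t k.natAbs) ^ d :=
        Finset.sum_le_sum fun u _ =>
          (Measure.pi_eval_preimage_le (fun w => kswCoordMeasure_univ_le_one w) u _).trans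
            (kswCoordMeasure_far_le ht hγ u T)
    _ = _ := by simp

end Measures

/-- The union bound over the `n = n'^d` vertices costs a factor `n`; with `T = n^e`, the last
condition makes `n * T^(d t - γ)` a negative power of `n`. -/
lemma exists_one_lt_decay_exponent {d γ e : ℝ} (hd : 0 < d) (hγ : d < γ) (he : 1 / (γ - d) < e) :
    ∃ t, 1 < t ∧ d * t ≤ γ ∧ 1 + e * (d * t - γ) < 0 := by
  have hγd : 0 < γ - d := sub_pos.mpr hγ
  have he0 : 0 < e := (by positivity : (0 : ℝ) < 1 / (γ - d)).trans he
  have hgap : d < γ - 1 / e := by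
    rw [div_lt_iff₀ hγd] at he
    rw [lt_sub_iff_add_lt, ← lt_sub_iff_add_lt', div_lt_iff₀ he0]
    linarith
  obtain ⟨s, hds, hs⟩ := exists_between hgap
  refine ⟨s / d, (one_lt_div hd).mpr hds, ?_, ?_⟩ <;> rw [mul_div_cancel₀ s hd.ne']
  · linarith [one_div_pos.mpr he0]
  · rw [lt_sub_comm, div_lt_iff₀ he0] at hs
    linarith

lemma tendsto_ofReal_pnat_rpow_mul_nhds_zero {a : ℝ} (ha : a < 0) {c : ℝ≥0∞} (hc : c ≠ ⊤) :
    Filter.Tendsto (fun n : ℕ+ => ENNReal.ofReal (((n : ℕ) : ℝ) ^ a) * c)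
      Filter.atTop (nhds 0) := by
  have hreal : Filter.Tendsto (fun n : ℕ => (n : ℝ) ^ a) Filter.atTop (nhds 0) := by
    simpa [Function.comp_def] using
      (tendsto_rpow_neg_atTop (neg_pos.mpr ha)).comp tendsto_natCast_atTop_atTop
  simpa using ENNReal.Tendsto.mul_const
    (ENNReal.tendsto_ofReal (PNat.tendsto_comp_val_iff.mpr hreal)) (Or.inr hc)

/-- In `KSW(n,d,γ)` with `γ > 2d`: for any fixed `ε > 0`, the probability
that some long-range edge connects two vertices at grid distance greater than
`n^(1/(γ-d)+ε)` (where `n = n'^d`) tends to `0` as `n → ∞`. -/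
theorem ksw_no_long_jumps (d : ℕ) (hd : 1 ≤ d) (γ : ℝ) (hγ : 2 * (d : ℝ) < γ)
    (ε : ℝ) (hε : 0 < ε) :
    Filter.Tendsto
      (fun n' : ℕ+ =>
        kswMeasure d n' γ
          {σ | ∃ u : GridV d n',
            (((n' : ℕ) : ℝ) ^ d) ^ ((1 : ℝ) / (γ - d) + ε) <
              ((gridGraph d n').dist u (σ u) : ℝ)})
      Filter.atTop (nhds 0) := by
  have hd0 : (0 : ℝ) < d := by exact_mod_cast hd
  set e := (1 : ℝ) / (γ - d) + ε
  obtain ⟨t, ht, htγ, hdecay⟩ :=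
    exists_one_lt_decay_exponent (e := e) hd0 (by linarith) (lt_add_of_pos_right _ hε)
  have hK : (∑' k : ℤ, clippedRpowNeg t k.natAbs) ^ d ≠ ⊤ :=
    ENNReal.pow_ne_top (tsum_clippedRpowNeg_natAbs_ne_top ht)
  refine tendsto_of_tendsto_of_tendsto_of_le_of_le tendsto_const_nhds
    (tendsto_ofReal_pnat_rpow_mul_nhds_zero (mul_neg_of_pos_of_neg hd0 hdecay) hK)
    (fun _ => zero_le) fun n' => ?_
  have hn : (0 : ℝ) < (n' : ℕ) := by exact_mod_cast n'.pos
  refine (kswMeasure_exists_far_le (by linarith) htγ _).trans_eq ?_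
  rw [← mul_assoc, ← ENNReal.ofReal_natCast, ← ENNReal.ofReal_pow (by positivity),
    ENNReal.ofReal_rpow_of_pos (by positivity), ← ENNReal.ofReal_mul (by positivity),
    ← Real.rpow_natCast, ← Real.rpow_mul hn.le, ← Real.rpow_mul hn.le, ← Real.rpow_add hn]
  ring_nf
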